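/- arXiv:2404.14323 — 2 statements merged into one kernel-verified Lean document; each statement's English description precedes it below -/
import Mathlib

section
/- Robustness of coherence is invariant under tensoring with a computational basis state: for any density matrix σ on ℂ^d and any basis vector |j⟩ of ℂ^k, C_R(|j⟩⟨j| ⊗ σ) = C_R(σ). -/
open Matrix ComplexOrder Kronecker

/-- A density matrix: positive semidefinite with unit trace. -/
def IsDensity {n : Type*} [Fintype n] [DecidableEq n] (ρ : Matrix n n ℂ) : Prop :=
  ρ.PosSemidef ∧ ρ.trace = 1

/-- Robustness of coherence:
`C_R(ρ) = min{ λ : ρ ≤ λτ, τ incoherent density matrix } − 1`. -/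
noncomputable def CR {n : Type*} [Fintype n] [DecidableEq n] (ρ : Matrix n n ℂ) : ℝ :=
  sInf {l : ℝ | ∃ τ : Matrix n n ℂ, IsDensity τ ∧ τ.IsDiag ∧
    ((l : ℂ) • τ - ρ).PosSemidef} - 1

lemma diagEntry_nonneg {n : Type*} [Fintype n] [DecidableEq n] {M : Matrix n n ℂ}
    (h : M.PosSemidef) (i : n) : 0 ≤ M i i := by
  exact h.diag_nonneg

lemma trace_nonneg' {n : Type*} [Fintype n] [DecidableEq n] {M : Matrix n n ℂ}
    (h : M.PosSemidef) : 0 ≤ M.trace :=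
  Finset.sum_nonneg fun i _ => diagEntry_nonneg h i

/-- The isometry embedding `ℂ^d` into the `j`-th block of `ℂ^k ⊗ ℂ^d`. -/
noncomputable def Bmat {d k : ℕ} (j : Fin k) : Matrix (Fin k × Fin d) (Fin d) ℂ :=
  Matrix.of fun pa b => if pa = (j, b) then 1 else 0

lemma kron_eq_conj {d k : ℕ} (j : Fin k) (M : Matrix (Fin d) (Fin d) ℂ) :
    (Matrix.single j j (1 : ℂ)) ⊗ₖ M = Bmat (d := d) j * M * (Bmat (d := d) j)ᴴ := by
  ext ⟨p, a⟩ ⟨q, e⟩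
  simp only [Bmat, mul_apply, conjTranspose_apply, kroneckerMap_apply, Matrix.single,
    Prod.ext_iff, of_apply, ite_mul, one_mul, zero_mul, mul_ite, mul_one, mul_zero]
  by_cases hp : p = j
  · by_cases hq : q = j
    · subst hp; subst hq
      simp [apply_ite (star : ℂ → ℂ), Finset.sum_ite_eq' Finset.univ]
    · have : ¬ (j = q) := fun h => hq h.symm
      simp [hp, hq, this, apply_ite (star : ℂ → ℂ)]
  · have : ¬ (j = p) := fun h => hp h.symm
    simp [hp, this]

lemma kron_psd {d k : ℕ} (j : Fin k) {M : Matrix (Fin d) (Fin d) ℂ} (hM : M.PosSemidef) :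
    ((Matrix.single j j (1 : ℂ)) ⊗ₖ M).PosSemidef := by
  rw [kron_eq_conj]
  exact hM.mul_mul_conjTranspose_same (Bmat j)

lemma kron_submatrix {d k : ℕ} (j : Fin k) (M : Matrix (Fin d) (Fin d) ℂ) :
    ((Matrix.single j j (1 : ℂ)) ⊗ₖ M).submatrix
      (fun a => (j, a)) (fun a => (j, a)) = M := by
  ext a b
  simp [submatrix_apply, kroneckerMap_apply, Matrix.single]

/-- Robustness of coherence is invariant under tensoring with a computational basis
state: `C_R(|j⟩⟨j| ⊗ σ) = C_R(σ)`. -/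
theorem cr_basisState_kronecker {d k : ℕ} (σ : Matrix (Fin d) (Fin d) ℂ)
    (hσ : IsDensity σ) (j : Fin k) :
    CR ((Matrix.single j j (1 : ℂ)) ⊗ₖ σ) = CR σ := by
  have hd : d ≠ 0 := by
    rintro rfl
    have := hσ.2
    simp [Matrix.trace] at this
  have hdC : (d : ℂ) ≠ 0 := Nat.cast_ne_zero.mpr hd
  have hE : (Matrix.single j j (1 : ℂ)).trace = 1 := by
    simp [Matrix.trace, Matrix.diag, Matrix.single, Finset.sum_ite_eq' Finset.univ]
  unfold CR
  congr 1
  apply congrArg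
  ext l
  simp only [Set.mem_setOf_eq]
  constructor
  · -- from kron side to σ side
    rintro ⟨τ, ⟨hτpsd, hτtr⟩, hτdiag, hpsd⟩
    -- l ≥ 1 (as complex inequality on l - 1)
    have htrkron : ((Matrix.single j j (1 : ℂ)) ⊗ₖ σ).trace = 1 := by
      rw [Matrix.trace_kronecker, hE, hσ.2, one_mul]
    have hl1 : (0 : ℂ) ≤ (l : ℂ) - 1 := by
      have := trace_nonneg' hpsd
      rwa [Matrix.trace_sub, Matrix.trace_smul, hτtr, htrkron, smul_eq_mul, mul_one] at this
    have hl0 : (0 : ℂ) ≤ (l : ℂ) := le_trans zero_le_one (le_of_sub_nonneg hl1)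
    -- restrict to the j-th block
    set e : Fin d → Fin k × Fin d := fun a => (j, a) with he
    set τ₀ : Matrix (Fin d) (Fin d) ℂ := τ.submatrix e e with hτ₀
    have hτ₀psd : τ₀.PosSemidef := hτpsd.submatrix e
    have hτ₀diag : τ₀.IsDiag := by
      intro a b hab
      exact hτdiag (by simp [he, hab] : e a ≠ e b)
    -- trace of τ₀ is at most 1
    set t : ℂ := τ₀.trace with ht
    have htsum : τ.trace = ∑ p : Fin k, ∑ a : Fin d, τ (p, a) (p, a) := by
      simpa [Matrix.trace, Matrix.diag] using
        (Fintype.sum_prod_type (f := fun p : Fin k × Fin d => τ p p))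
    have hblock : ∀ p : Fin k, 0 ≤ ∑ a : Fin d, τ (p, a) (p, a) :=
      fun p => Finset.sum_nonneg fun a _ => diagEntry_nonneg hτpsd _
    have h1t : (0 : ℂ) ≤ 1 - t := by
      have ht' : t = ∑ a : Fin d, τ (j, a) (j, a) := by
        simp [ht, hτ₀, Matrix.trace, Matrix.diag, Matrix.submatrix_apply, he]
      have heq : (1 : ℂ) - t = ∑ p ∈ Finset.univ.erase j, ∑ a : Fin d, τ (p, a) (p, a) := by
        rw [← hτtr, htsum, ← Finset.add_sum_erase Finset.univ _ (Finset.mem_univ j), ht']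
        ring
      rw [heq]
      exact Finset.sum_nonneg fun p _ => hblock p
    set c : ℂ := (1 - t) / d with hc
    have hc0 : 0 ≤ c := by
      rw [hc, div_eq_mul_inv]
      refine mul_nonneg h1t ?_
      rw [show ((d : ℂ))⁻¹ = (((d : ℝ)⁻¹ : ℝ) : ℂ) by push_cast; ring]
      exact_mod_cast inv_nonneg.mpr (Nat.cast_nonneg d)
    refine ⟨τ₀ + Matrix.diagonal (fun _ => c), ⟨?_, ?_⟩, ?_, ?_⟩
    · exact hτ₀psd.add (Matrix.PosSemidef.diagonal fun _ => hc0)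
    · rw [Matrix.trace_add, Matrix.trace_diagonal]
      simp only [Finset.sum_const, Finset.card_univ, Fintype.card_fin, nsmul_eq_mul]
      rw [← ht, hc]
      field_simp
      ring
    · exact hτ₀diag.add (Matrix.isDiag_diagonal _)
    · have key : (l : ℂ) • (τ₀ + Matrix.diagonal fun _ => c) - σ
          = (((l : ℂ) • τ - (Matrix.single j j (1 : ℂ)) ⊗ₖ σ).submatrix e e)
            + Matrix.diagonal (fun _ => (l : ℂ) * c) := by
        ext a b
        have hkron : ((Matrix.single j j (1 : ℂ)) ⊗ₖ σ) (e a) (e b) = σ a b := by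
          simp [he, kroneckerMap_apply, Matrix.single]
        by_cases hab : a = b <;>
          simp [Matrix.submatrix_apply, Matrix.diagonal, hτ₀, hab, hkron, he,
            Matrix.sub_apply, Matrix.smul_apply, Matrix.add_apply, smul_eq_mul] <;>
          ring
      rw [key]
      exact (hpsd.submatrix e).add
        (Matrix.PosSemidef.diagonal fun _ => mul_nonneg hl0 hc0)
  · -- from σ side to kron side
    rintro ⟨τ, ⟨hτpsd, hτtr⟩, hτdiag, hpsd⟩
    refine ⟨(Matrix.single j j (1 : ℂ)) ⊗ₖ τ, ⟨kron_psd j hτpsd, ?_⟩, ?_, ?_⟩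
    · rw [Matrix.trace_kronecker, hE, hτtr, one_mul]
    · refine Matrix.IsDiag.kronecker ?_ hτdiag
      intro a b hab
      simp only [Matrix.single, of_apply]
      rw [if_neg]
      rintro ⟨rfl, rfl⟩
      exact hab rfl
    · have : (l : ℂ) • ((Matrix.single j j (1 : ℂ)) ⊗ₖ τ)
          - (Matrix.single j j (1 : ℂ)) ⊗ₖ σ
          = (Matrix.single j j (1 : ℂ)) ⊗ₖ ((l : ℂ) • τ - σ) := by
        ext ⟨p, a⟩ ⟨q, e⟩
        simp [kroneckerMap_apply, Matrix.sub_apply, Matrix.smul_apply, mul_sub]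
        ring
      rw [this]
      exact kron_psd j hpsd
end

section
/- Robustness of coherence is additive on classical-quantum states: for probabilities p_j summing to 1 and density matrices σ_j on ℂ^d, C_R( Σ_j p_j |j⟩⟨j| ⊗ σ_j ) = Σ_j p_j C_R(σ_j), where {|j⟩} is the computational basis of ℂ^k. -/
open Matrix ComplexOrder Kronecker

/-! ### Auxiliary definitions and lemmas -/

/-- The feasible set occurring in the definition of `CR`. -/
def Sset {n : Type*} [Fintype n] [DecidableEq n] (ρ : Matrix n n ℂ) : Set ℝ :=
  {l : ℝ | ∃ τ : Matrix n n ℂ, IsDensity τ ∧ τ.IsDiag ∧ ((l : ℂ) • τ - ρ).PosSemidef}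

lemma CR_eq_Sset {n : Type*} [Fintype n] [DecidableEq n] (ρ : Matrix n n ℂ) :
    CR ρ = sInf (Sset ρ) - 1 := rfl

section aux
variable {n : Type*} [Fintype n] [DecidableEq n]

lemma psd_trace_nonneg {M : Matrix n n ℂ} (h : M.PosSemidef) : 0 ≤ M.trace := by
  rw [Matrix.trace]
  refine Finset.sum_nonneg fun i _ => ?_
  have := h.dotProduct_mulVec_nonneg (Pi.single i 1)
  simpa [Matrix.mulVec_single, dotProduct, Pi.single_apply] using this

lemma psd_trace_eq_re {M : Matrix n n ℂ} (h : M.PosSemidef) :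
    M.trace = ((M.trace.re : ℝ) : ℂ) := by
  have := psd_trace_nonneg h
  rw [Complex.le_def] at this
  exact Complex.ext rfl (by simpa using this.2.symm)

lemma psd_smul_real {M : Matrix n n ℂ} (h : M.PosSemidef) {c : ℝ} (hc : 0 ≤ c) :
    ((c : ℂ) • M).PosSemidef := by
  refine Matrix.PosSemidef.of_dotProduct_mulVec_nonneg ?_ ?_
  · unfold Matrix.IsHermitian
    rw [conjTranspose_smul, h.1]
    simp
  · intro x
    rw [Matrix.smul_mulVec, dotProduct_smul]
    exact mul_nonneg (by simpa using hc) (h.dotProduct_mulVec_nonneg x)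

lemma psd_sum {ι : Type*} (s : Finset ι) (f : ι → Matrix n n ℂ)
    (h : ∀ i ∈ s, (f i).PosSemidef) : (∑ i ∈ s, f i).PosSemidef := by
  classical
  induction s using Finset.induction_on with
  | empty => simpa using Matrix.PosSemidef.zero
  | insert a s hnot ih =>
    rw [Finset.sum_insert hnot]
    exact (h a (Finset.mem_insert_self a s)).add
      (ih fun i hi => h i (Finset.mem_insert_of_mem hi))

lemma one_sub_psd {ρ : Matrix n n ℂ} (h : ρ.PosSemidef) (ht : ρ.trace = 1) :
    ((1 : Matrix n n ℂ) - ρ).PosSemidef := by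
  have hH := h.1
  have hev : ∀ i, 0 ≤ hH.eigenvalues i := h.eigenvalues_nonneg
  have hUU : star (hH.eigenvectorUnitary : Matrix n n ℂ) * (hH.eigenvectorUnitary : Matrix n n ℂ)
      = 1 := hH.eigenvectorUnitary.2.1
  have hUU' : (hH.eigenvectorUnitary : Matrix n n ℂ) * star (hH.eigenvectorUnitary : Matrix n n ℂ)
      = 1 := hH.eigenvectorUnitary.2.2
  have hspec := hH.spectral_theorem
  rw [Unitary.conjStarAlgAut_apply] at hspec
  have htr : ∑ i, (hH.eigenvalues i : ℝ) = 1 := by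
    have h1 : ρ.trace
        = (Matrix.diagonal (RCLike.ofReal ∘ hH.eigenvalues) : Matrix n n ℂ).trace := by
      conv_lhs => rw [hspec]
      rw [Matrix.trace_mul_cycle]
      rw [hUU, Matrix.one_mul]
    rw [ht, Matrix.trace_diagonal] at h1
    have h2 : ((1:ℂ)) = ((∑ i, hH.eigenvalues i : ℝ) : ℂ) := by
      rw [h1]; push_cast; rfl
    exact_mod_cast h2.symm
  have hle : ∀ i, hH.eigenvalues i ≤ 1 := by
    intro i
    rw [← htr]
    exact Finset.single_le_sum (fun j _ => hev j) (Finset.mem_univ i)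
  have key : (1 : Matrix n n ℂ) - ρ
      = (hH.eigenvectorUnitary : Matrix n n ℂ)
        * ((1 : Matrix n n ℂ) - Matrix.diagonal (RCLike.ofReal ∘ hH.eigenvalues))
        * star (hH.eigenvectorUnitary : Matrix n n ℂ) := by
    rw [Matrix.mul_sub, Matrix.sub_mul, Matrix.mul_one, hUU', ← hspec]
  rw [key]
  refine Matrix.PosSemidef.mul_mul_conjTranspose_same ?_ _
  rw [← Matrix.diagonal_one, Matrix.diagonal_sub]
  refine Matrix.posSemidef_diagonal_iff.mpr fun i => ?_
  have : (0:ℝ) ≤ 1 - hH.eigenvalues i := by linarith [hle i]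
  simpa using (Complex.zero_le_real.mpr this)

lemma Sset_lb {ρ : Matrix n n ℂ} (hρ : IsDensity ρ) {l : ℝ} (hl : l ∈ Sset ρ) : 1 ≤ l := by
  obtain ⟨τ, hτ, -, hpsd⟩ := hl
  have h0 := psd_trace_nonneg hpsd
  rw [Matrix.trace_sub, Matrix.trace_smul, hτ.2, hρ.2, smul_eq_mul, mul_one] at h0
  have : (0:ℂ) ≤ ((l - 1 : ℝ) : ℂ) := by push_cast; simpa using h0
  have := Complex.zero_le_real.mp this
  linarith

lemma Sset_bddBelow {ρ : Matrix n n ℂ} (hρ : IsDensity ρ) : BddBelow (Sset ρ) :=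
  ⟨1, fun _ hl => Sset_lb hρ hl⟩

lemma Sset_nonempty [Nonempty n] {ρ : Matrix n n ℂ} (hρ : IsDensity ρ) :
    (Sset ρ).Nonempty := by
  have hcard : (Fintype.card n : ℝ) ≠ 0 := by
    simp [Fintype.card_ne_zero]
  refine ⟨(Fintype.card n : ℝ), (((Fintype.card n : ℝ)⁻¹ : ℝ) : ℂ) • 1, ⟨?_, ?_⟩, ?_, ?_⟩
  · exact psd_smul_real Matrix.PosSemidef.one (inv_nonneg.mpr (by positivity))
  · rw [Matrix.trace_smul, Matrix.trace_one, smul_eq_mul]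
    push_cast
    field_simp
  · exact Matrix.IsDiag.smul _ Matrix.isDiag_one
  · have : (((Fintype.card n : ℝ)) : ℂ) • ((((Fintype.card n : ℝ)⁻¹ : ℝ) : ℂ) • 1)
        = (1 : Matrix n n ℂ) := by
      rw [smul_smul, ← Complex.ofReal_mul, mul_inv_cancel₀ hcard]
      simp
    rw [this]
    exact one_sub_psd hρ.1 hρ.2

end aux

section kron
variable {d k : ℕ}

lemma kron_std_apply (j : Fin k) (M : Matrix (Fin d) (Fin d) ℂ) (i i' : Fin k) (a b : Fin d) :
    ((Matrix.single j j (1:ℂ)) ⊗ₖ M) (i,a) (i',b)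
      = (if j = i ∧ j = i' then 1 else 0) * M a b := by
  simp [Matrix.kroneckerMap_apply, Matrix.single_apply, Matrix.of_apply, eq_comm]

lemma kron_std_psd (j : Fin k) {M : Matrix (Fin d) (Fin d) ℂ} (hM : M.PosSemidef) :
    ((Matrix.single j j (1:ℂ)) ⊗ₖ M).PosSemidef := by
  refine Matrix.PosSemidef.of_dotProduct_mulVec_nonneg ?_ ?_
  · unfold Matrix.IsHermitian
    ext ⟨i,a⟩ ⟨i',b⟩
    rw [Matrix.conjTranspose_apply, kron_std_apply, kron_std_apply]
    have hM' : (starRingEnd ℂ) (M b a) = M a b := by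
      have := congrFun (congrFun hM.1 a) b
      rw [Matrix.conjTranspose_apply] at this
      exact this
    simp only [star_mul', and_comm]
    split_ifs
    · simpa using hM'
    · simp
  · intro x
    have key : star x ⬝ᵥ ((Matrix.single j j (1:ℂ)) ⊗ₖ M) *ᵥ x
        = star (fun a => x (j,a)) ⬝ᵥ M *ᵥ (fun a => x (j,a)) := by
      simp only [dotProduct, Matrix.mulVec, Fintype.sum_prod_type, Matrix.kroneckerMap_apply,
        Pi.star_apply, Matrix.single_apply, Matrix.of_apply, dotProduct]
      simp [ite_and, Finset.sum_ite_eq, mul_assoc, eq_comm, Finset.mul_sum]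
    rw [key]
    exact hM.dotProduct_mulVec_nonneg _

lemma kron_std_diag (j : Fin k) {M : Matrix (Fin d) (Fin d) ℂ} (hM : M.IsDiag) :
    ((Matrix.single j j (1:ℂ)) ⊗ₖ M).IsDiag := by
  rintro ⟨i,a⟩ ⟨i',b⟩ hne
  rw [kron_std_apply]
  by_cases hii : i = i'
  · subst hii
    have hab : a ≠ b := fun h => hne (by rw [h])
    rw [hM hab, mul_zero]
  · have : ¬ (j = i ∧ j = i') := fun ⟨h1, h2⟩ => hii (h1 ▸ h2)
    rw [if_neg this, zero_mul]

lemma kron_std_trace (j : Fin k) (M : Matrix (Fin d) (Fin d) ℂ) :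
    ((Matrix.single j j (1:ℂ)) ⊗ₖ M).trace = M.trace := by
  rw [Matrix.trace_kronecker, Matrix.trace_single_eq_same, one_mul]

lemma cq_density (p : Fin k → ℝ) (hp : ∀ j, 0 ≤ p j) (hpsum : ∑ j, p j = 1)
    (σ : Fin k → Matrix (Fin d) (Fin d) ℂ) (hσ : ∀ j, IsDensity (σ j)) :
    IsDensity (∑ j, (p j : ℂ) • ((Matrix.single j j (1 : ℂ)) ⊗ₖ σ j)) := by
  constructor
  · exact psd_sum _ _ fun j _ => psd_smul_real (kron_std_psd j (hσ j).1) (hp j)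
  · rw [Matrix.trace_sum]
    have : ∀ j, ((p j : ℂ) • ((Matrix.single j j (1 : ℂ)) ⊗ₖ σ j)).trace = (p j : ℂ) := by
      intro j
      rw [Matrix.trace_smul, kron_std_trace, (hσ j).2, smul_eq_mul, mul_one]
    rw [Finset.sum_congr rfl fun j _ => this j]
    rw [← Complex.ofReal_sum, hpsum, Complex.ofReal_one]

end kron

section main
variable {d k : ℕ}

lemma cq_mem (p : Fin k → ℝ) (hp : ∀ j, 0 ≤ p j) (hpsum : ∑ j, p j = 1)
    (σ : Fin k → Matrix (Fin d) (Fin d) ℂ) (hσ : ∀ j, IsDensity (σ j))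
    (lam : Fin k → ℝ) (hlam : ∀ j, lam j ∈ Sset (σ j)) :
    (∑ j, p j * lam j) ∈ Sset (∑ j, (p j : ℂ) • ((Matrix.single j j (1 : ℂ)) ⊗ₖ σ j)) := by
  have hl1 : ∀ j, 1 ≤ lam j := fun j => Sset_lb (hσ j) (hlam j)
  set L : ℝ := ∑ j, p j * lam j with hL
  have hL1 : 1 ≤ L := by
    rw [hL, ← hpsum]
    exact Finset.sum_le_sum fun j _ => le_mul_of_one_le_right (hp j) (hl1 j)
  have hL0 : (0:ℝ) < L := lt_of_lt_of_le one_pos hL1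
  have hLne : (L:ℂ) ≠ 0 := by
    simpa using Complex.ofReal_ne_zero.mpr (ne_of_gt hL0)
  choose τ hτden hτdiag hτpsd using hlam
  refine ⟨∑ j, ((p j * lam j / L : ℝ) : ℂ) • ((Matrix.single j j (1:ℂ)) ⊗ₖ τ j),
    ⟨?_, ?_⟩, ?_, ?_⟩
  · refine psd_sum _ _ fun j _ => psd_smul_real (kron_std_psd j (hτden j).1) ?_
    exact div_nonneg (mul_nonneg (hp j) ((zero_le_one).trans (hl1 j))) hL0.le
  · rw [Matrix.trace_sum]
    have ht : ∀ j, (((p j * lam j / L : ℝ) : ℂ)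
        • ((Matrix.single j j (1:ℂ)) ⊗ₖ τ j)).trace = ((p j * lam j / L : ℝ) : ℂ) := by
      intro j
      rw [Matrix.trace_smul, kron_std_trace, (hτden j).2, smul_eq_mul, mul_one]
    rw [Finset.sum_congr rfl fun j _ => ht j, ← Complex.ofReal_sum, ← Finset.sum_div, ← hL,
      div_self (ne_of_gt hL0), Complex.ofReal_one]
  · intro i i' hne
    rw [Matrix.sum_apply]
    exact Finset.sum_eq_zero fun j _ => by
      rw [Matrix.smul_apply, (kron_std_diag j (hτdiag j)) hne, smul_zero]
  · have key : (L:ℂ) • (∑ j, ((p j * lam j / L : ℝ):ℂ)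
          • ((Matrix.single j j (1:ℂ)) ⊗ₖ τ j))
        - (∑ j, (p j:ℂ) • ((Matrix.single j j (1:ℂ)) ⊗ₖ σ j))
        = ∑ j, (p j : ℂ) • ((Matrix.single j j (1:ℂ)) ⊗ₖ ((lam j : ℂ) • τ j - σ j)) := by
      rw [Finset.smul_sum, ← Finset.sum_sub_distrib]
      refine Finset.sum_congr rfl fun j _ => ?_
      ext ⟨i,a⟩ ⟨i',b⟩
      simp only [Matrix.sub_apply, Matrix.smul_apply, kron_std_apply, smul_eq_mul]
      push_cast
      split_ifs
      · field_simp
      · ring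
    rw [key]
    refine psd_sum _ _ fun j _ => psd_smul_real (kron_std_psd j ?_) (hp j)
    exact hτpsd j

lemma cq_lower (p : Fin k → ℝ) (hp : ∀ j, 0 ≤ p j) (hpsum : ∑ j, p j = 1)
    (σ : Fin k → Matrix (Fin d) (Fin d) ℂ) (hσ : ∀ j, IsDensity (σ j))
    {l : ℝ} (hl : l ∈ Sset (∑ j, (p j : ℂ) • ((Matrix.single j j (1 : ℂ)) ⊗ₖ σ j))) :
    ∑ j, p j * sInf (Sset (σ j)) ≤ l := by
  have hρ := cq_density p hp hpsum σ hσ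
  have hl1 : 1 ≤ l := Sset_lb hρ hl
  obtain ⟨τ, hτden, hτdiag, hpsd⟩ := hl
  set τj : Fin k → Matrix (Fin d) (Fin d) ℂ :=
    fun j => τ.submatrix (Prod.mk j) (Prod.mk j) with hτj
  have hτjpsd : ∀ j, (τj j).PosSemidef := fun j => hτden.1.submatrix _
  set q : Fin k → ℝ := fun j => ((τj j).trace).re with hq
  have hqc : ∀ j, (τj j).trace = ((q j : ℝ) : ℂ) := fun j => psd_trace_eq_re (hτjpsd j)
  have hq0 : ∀ j, 0 ≤ q j := by
    intro j
    have := (Complex.le_def.mp (psd_trace_nonneg (hτjpsd j))).1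
    simpa [hq] using this
  have hqsum : ∑ j, q j = 1 := by
    have h1 : τ.trace = ∑ j, (τj j).trace := by
      simp only [Matrix.trace, Matrix.diag, Fintype.sum_prod_type, hτj, Matrix.submatrix_apply]
    rw [hτden.2] at h1
    have h2 : (1:ℂ) = ((∑ j, q j : ℝ):ℂ) := by
      rw [h1, Finset.sum_congr rfl fun j _ => hqc j]
      push_cast
      rfl
    exact_mod_cast h2.symm
  have hτjdiag : ∀ j, (τj j).IsDiag := by
    intro j a b hab
    exact hτdiag (by simp [Prod.ext_iff, hab] : ((j,a) : Fin k × Fin d) ≠ (j,b))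
  have hblock : ∀ j, ((l:ℂ) • τj j - (p j : ℂ) • σ j).PosSemidef := by
    intro j
    have hsub := hpsd.submatrix (fun a : Fin d => ((j, a) : Fin k × Fin d))
    have heq : ((l:ℂ) • τ - ∑ i, (p i : ℂ) • ((Matrix.single i i (1 : ℂ)) ⊗ₖ σ i)).submatrix
        (fun a : Fin d => ((j, a) : Fin k × Fin d)) (fun a : Fin d => ((j, a) : Fin k × Fin d))
        = (l:ℂ) • τj j - (p j : ℂ) • σ j := by
      ext a b
      simp only [Matrix.submatrix_apply, Matrix.sub_apply, Matrix.smul_apply, Matrix.sum_apply,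
        kron_std_apply, smul_eq_mul, hτj, and_self, mul_ite, ite_mul, mul_one, mul_zero, zero_mul,
        one_mul]
      congr 1
      rw [Finset.sum_ite_eq' Finset.univ j (fun i => p i * σ i a b)]
      simp
    rw [heq] at hsub
    exact hsub
  have hkey : ∀ j, p j * sInf (Sset (σ j)) ≤ l * q j := by
    intro j
    have htr := psd_trace_nonneg (hblock j)
    rw [Matrix.trace_sub, Matrix.trace_smul, Matrix.trace_smul, hqc j, (hσ j).2,
      smul_eq_mul, smul_eq_mul, mul_one] at htr
    have hpq : p j ≤ l * q j := by
      have h3 : (0:ℂ) ≤ ((l * q j - p j : ℝ):ℂ) := by push_cast; simpa using htr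
      have := Complex.zero_le_real.mp h3
      linarith
    by_cases hpj : p j = 0
    · rw [hpj, zero_mul]
      exact mul_nonneg (zero_le_one.trans hl1) (hq0 j)
    · have hpj' : 0 < p j := lt_of_le_of_ne (hp j) (Ne.symm hpj)
      have hqj : 0 < q j := by
        rcases lt_or_eq_of_le (hq0 j) with h|h
        · exact h
        · exfalso; rw [← h, mul_zero] at hpq; linarith
      have hmem : l * q j / p j ∈ Sset (σ j) := by
        refine ⟨(((q j)⁻¹ : ℝ) : ℂ) • τj j, ⟨?_, ?_⟩, ?_, ?_⟩
        · exact psd_smul_real (hτjpsd j) (inv_nonneg.mpr (hq0 j))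
        · rw [Matrix.trace_smul, hqc j, smul_eq_mul, ← Complex.ofReal_mul,
            inv_mul_cancel₀ (ne_of_gt hqj), Complex.ofReal_one]
        · exact Matrix.IsDiag.smul _ (hτjdiag j)
        · have heq2 : ((l * q j / p j : ℝ):ℂ) • ((((q j)⁻¹ : ℝ) : ℂ) • τj j) - σ j
              = (((p j)⁻¹ : ℝ):ℂ) • ((l:ℂ) • τj j - (p j : ℂ) • σ j) := by
            ext a b
            simp only [Matrix.sub_apply, Matrix.smul_apply, smul_eq_mul]
            push_cast
            field_simp
          rw [heq2]
          exact psd_smul_real (hblock j) (inv_nonneg.mpr (hp j))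
      have hle := csInf_le (Sset_bddBelow (hσ j)) hmem
      calc p j * sInf (Sset (σ j)) ≤ p j * (l * q j / p j) :=
            mul_le_mul_of_nonneg_left hle (hp j)
        _ = l * q j := by field_simp
  calc ∑ j, p j * sInf (Sset (σ j)) ≤ ∑ j, l * q j := Finset.sum_le_sum fun j _ => hkey j
    _ = l * ∑ j, q j := by rw [← Finset.mul_sum]
    _ = l := by rw [hqsum, mul_one]

end main

/-- Robustness of coherence is additive on classical-quantum states:
`C_R(∑ⱼ pⱼ |j⟩⟨j| ⊗ σⱼ) = ∑ⱼ pⱼ C_R(σⱼ)`. -/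
theorem cr_cq_state_additive {d k : ℕ} (p : Fin k → ℝ)
    (hp : ∀ j, 0 ≤ p j) (hpsum : ∑ j, p j = 1)
    (σ : Fin k → Matrix (Fin d) (Fin d) ℂ) (hσ : ∀ j, IsDensity (σ j)) :
    CR (∑ j, (p j : ℂ) • ((Matrix.single j j (1 : ℂ)) ⊗ₖ σ j)) =
      ∑ j, p j * CR (σ j) := by
  have hk : 0 < k := by
    by_contra h
    push_neg at h
    have hk0 : k = 0 := Nat.le_zero.mp h
    subst hk0
    simp at hpsum
  have hd : 0 < d := by
    rcases Nat.eq_zero_or_pos d with h|h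
    · exfalso
      have := (hσ ⟨0, hk⟩).2
      subst h
      simp [Matrix.trace] at this
    · exact h
  haveI : Nonempty (Fin d) := ⟨⟨0, hd⟩⟩
  haveI : Nonempty (Fin k) := ⟨⟨0, hk⟩⟩
  have hρ := cq_density p hp hpsum σ hσ
  have hSne : ∀ j, (Sset (σ j)).Nonempty := fun j => Sset_nonempty (hσ j)
  have hmain : sInf (Sset (∑ j, (p j : ℂ) • ((Matrix.single j j (1 : ℂ)) ⊗ₖ σ j)))
      = ∑ j, p j * sInf (Sset (σ j)) := by
    apply le_antisymm
    · refine le_of_forall_pos_le_add fun ε hε => ?_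
      have hch : ∀ j, ∃ a ∈ Sset (σ j), a < sInf (Sset (σ j)) + ε :=
        fun j => Real.lt_sInf_add_pos (hSne j) hε
      choose lam hmem hlt using hch
      have h1 := csInf_le (Sset_bddBelow hρ) (cq_mem p hp hpsum σ hσ lam hmem)
      have h2 : ∑ j, p j * lam j ≤ ∑ j, p j * (sInf (Sset (σ j)) + ε) :=
        Finset.sum_le_sum fun j _ => mul_le_mul_of_nonneg_left (hlt j).le (hp j)
      have h3 : ∑ j, p j * (sInf (Sset (σ j)) + ε) = (∑ j, p j * sInf (Sset (σ j))) + ε := by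
        simp [mul_add, Finset.sum_add_distrib, ← Finset.sum_mul, hpsum]
      linarith
    · exact le_csInf (Sset_nonempty hρ) fun l hl => cq_lower p hp hpsum σ hσ hl
  rw [CR_eq_Sset, hmain]
  simp only [CR_eq_Sset, mul_sub, mul_one, Finset.sum_sub_distrib, hpsum]
end
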